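/- Let X be a metric space, let C ≥ 0 and T > 0, and let γ : [0,T] → X be continuous such that for every a ∈ (0,T] the restriction of γ to [a,T] is Lipschitz with constant C·a^{-1/2}. Then for every t ∈ [0,T] one has dist(γ(t), γ(0)) ≤ (1 + √2)·C·√t. -/
import Mathlib

/-- Metric-space version of the square-root-in-time displacement estimate: if a continuous
curve `γ : [0,T] → X` is `C a^{-1/2}`-Lipschitz on each `[a,T]`, `a ∈ (0,T]`, then
`dist(γ(t), γ(0)) ≤ (1 + √2) C √t` on `[0,T]`. -/
theorem stmt_5 {X : Type*} [MetricSpace X]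
    (C T : ℝ) (hC : 0 ≤ C) (hT : 0 < T)
    (γ : ℝ → X) (hcont : ContinuousOn γ (Set.Icc 0 T))
    (hlip : ∀ a ∈ Set.Ioc (0 : ℝ) T,
      LipschitzOnWith (Real.toNNReal (C * a ^ (-(1 : ℝ) / 2))) γ (Set.Icc a T)) :
    ∀ t ∈ Set.Icc (0 : ℝ) T,
      dist (γ t) (γ 0) ≤ (1 + Real.sqrt 2) * C * Real.sqrt t := by
  rintro t ⟨ht0, htT⟩
  rcases eq_or_lt_of_le ht0 with rfl | ht
  · simp [Real.sqrt_zero]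
  have hs2 : (0:ℝ) < Real.sqrt 2 := Real.sqrt_pos.mpr (by norm_num)
  have hs2sq : Real.sqrt 2 * Real.sqrt 2 = 2 := Real.mul_self_sqrt (by norm_num)
  set r : ℝ := (Real.sqrt 2)⁻¹ with hr
  have hr0 : 0 < r := inv_pos.mpr hs2
  have hr1 : r < 1 := by
    rw [hr, inv_lt_one_iff₀]
    right
    nlinarith
  -- single dyadic step
  have step : ∀ s : ℝ, 0 < s → s ≤ T →
      dist (γ s) (γ (s / 2)) ≤ C * Real.sqrt (s / 2) := by
    intro s hs hsT
    have hhalf : (0:ℝ) < s / 2 := by linarith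
    have h := hlip (s / 2) ⟨hhalf, by linarith⟩
    have hmem1 : s ∈ Set.Icc (s / 2) T := ⟨by linarith, hsT⟩
    have hmem2 : s / 2 ∈ Set.Icc (s / 2) T := ⟨le_refl _, by linarith⟩
    have hd := h.dist_le_mul s hmem1 (s / 2) hmem2
    have hnn : 0 ≤ C * (s / 2) ^ (-(1:ℝ) / 2) :=
      mul_nonneg hC (Real.rpow_nonneg hhalf.le _)
    rw [Real.coe_toNNReal _ hnn] at hd
    have hdist : dist s (s / 2) = s / 2 := by
      rw [Real.dist_eq, abs_of_nonneg (by linarith)]; ring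
    rw [hdist] at hd
    refine hd.trans (le_of_eq ?_)
    have hrpow : (s / 2) ^ (-(1:ℝ) / 2) = (Real.sqrt (s / 2))⁻¹ := by
      rw [show (-(1:ℝ) / 2) = -(1/2) by ring, Real.rpow_neg hhalf.le,
        ← Real.sqrt_eq_rpow]
    rw [hrpow]
    have hsq : Real.sqrt (s / 2) * Real.sqrt (s / 2) = s / 2 :=
      Real.mul_self_sqrt hhalf.le
    have hsqpos : 0 < Real.sqrt (s / 2) := Real.sqrt_pos.mpr hhalf
    have h2 : (Real.sqrt (s / 2))⁻¹ * (s / 2) = Real.sqrt (s / 2) := by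
      rw [inv_mul_eq_div, div_eq_iff hsqpos.ne']
      exact hsq.symm
    rw [mul_assoc, h2]
  -- sqrt of dyadic point
  have hsqrt_pow : ∀ n : ℕ, Real.sqrt ((2:ℝ) ^ n) = Real.sqrt 2 ^ n := by
    intro n
    have h1 : (Real.sqrt 2 ^ n) ^ 2 = (2:ℝ) ^ n := by
      rw [← pow_mul, mul_comm, pow_mul, Real.sq_sqrt (by norm_num : (0:ℝ) ≤ 2)]
    calc Real.sqrt ((2:ℝ) ^ n) = Real.sqrt ((Real.sqrt 2 ^ n) ^ 2) := by rw [h1]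
      _ = Real.sqrt 2 ^ n := Real.sqrt_sq (pow_nonneg hs2.le n)
  have hsqrt_dyadic : ∀ n : ℕ, Real.sqrt (t / 2 ^ n) = Real.sqrt t * r ^ n := by
    intro n
    rw [Real.sqrt_div ht0, hsqrt_pow, hr, inv_pow, div_eq_mul_inv]
  -- the key induction
  have key : ∀ n : ℕ, dist (γ t) (γ (t / 2 ^ n)) ≤
      (1 + Real.sqrt 2) * C * Real.sqrt t * (1 - r ^ n) := by
    intro n
    induction n with
    | zero => simp
    | succ n ih =>
      have hsn : (0:ℝ) < t / 2 ^ n := by positivity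
      have hsnT : t / 2 ^ n ≤ T := by
        calc t / 2 ^ n ≤ t / 1 := by
              apply div_le_div_of_nonneg_left ht.le one_pos
              exact one_le_pow₀ (by norm_num)
          _ = t := div_one t
          _ ≤ T := htT
      have hstep := step (t / 2 ^ n) hsn hsnT
      have heq : (t / 2 ^ n) / 2 = t / 2 ^ (n + 1) := by
        rw [pow_succ]; ring
      rw [heq, hsqrt_dyadic (n + 1)] at hstep
      have htri := dist_triangle (γ t) (γ (t / 2 ^ n)) (γ (t / 2 ^ (n + 1)))
      have hgeo : C * (Real.sqrt t * r ^ (n + 1)) =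
          (1 + Real.sqrt 2) * C * Real.sqrt t * (r ^ n - r ^ (n + 1)) := by
        have h1 : (1 + Real.sqrt 2) * (1 - r) = r := by
          rw [hr]
          field_simp
          nlinarith
        have : (1 + Real.sqrt 2) * (r ^ n - r ^ (n + 1)) = r ^ (n + 1) := by
          rw [pow_succ]
          calc (1 + Real.sqrt 2) * (r ^ n - r ^ n * r)
              = r ^ n * ((1 + Real.sqrt 2) * (1 - r)) := by ring
            _ = r ^ n * r := by rw [h1]
        calc C * (Real.sqrt t * r ^ (n + 1))
            = C * Real.sqrt t * ((1 + Real.sqrt 2) * (r ^ n - r ^ (n + 1))) := by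
              rw [this]; ring
          _ = (1 + Real.sqrt 2) * C * Real.sqrt t * (r ^ n - r ^ (n + 1)) := by ring
      calc dist (γ t) (γ (t / 2 ^ (n + 1)))
          ≤ dist (γ t) (γ (t / 2 ^ n)) + dist (γ (t / 2 ^ n)) (γ (t / 2 ^ (n + 1))) := htri
        _ ≤ (1 + Real.sqrt 2) * C * Real.sqrt t * (1 - r ^ n)
            + C * (Real.sqrt t * r ^ (n + 1)) := add_le_add ih hstep
        _ = (1 + Real.sqrt 2) * C * Real.sqrt t * (1 - r ^ (n + 1)) := by
            rw [hgeo]; ring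
  -- pass to the limit using continuity at 0
  refine le_of_forall_pos_le_add ?_
  intro ε hε
  have hc0 : ContinuousWithinAt γ (Set.Icc 0 T) 0 :=
    hcont 0 ⟨le_refl _, hT.le⟩
  rw [Metric.continuousWithinAt_iff] at hc0
  obtain ⟨δ, hδ, hδε⟩ := hc0 ε hε
  obtain ⟨n, hn⟩ := exists_pow_lt_of_lt_one (div_pos hδ ht) (by norm_num : (1:ℝ)/2 < 1)
  have hlt : t / 2 ^ n < δ := by
    have : t * (1/2) ^ n < t * (δ / t) := by
      exact (mul_lt_mul_iff_right₀ ht).mpr hn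
    rw [mul_div_cancel₀ _ ht.ne'] at this
    calc t / 2 ^ n = t * (1/2) ^ n := by rw [div_pow, one_pow]; ring
      _ < δ := this
  have hmem : t / 2 ^ n ∈ Set.Icc (0:ℝ) T := by
    constructor
    · positivity
    · calc t / 2 ^ n ≤ t / 1 := by
            apply div_le_div_of_nonneg_left ht.le one_pos
            exact one_le_pow₀ (by norm_num)
        _ = t := div_one t
        _ ≤ T := htT
  have hdd : dist (t / 2 ^ n) 0 < δ := by
    rw [Real.dist_eq, sub_zero, abs_of_nonneg (by positivity)]
    exact hlt
  have hnear : dist (γ (t / 2 ^ n)) (γ 0) < ε := hδε hmem hdd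
  have hnn : 0 ≤ (1 + Real.sqrt 2) * C * Real.sqrt t := by positivity
  calc dist (γ t) (γ 0)
      ≤ dist (γ t) (γ (t / 2 ^ n)) + dist (γ (t / 2 ^ n)) (γ 0) := dist_triangle _ _ _
    _ ≤ (1 + Real.sqrt 2) * C * Real.sqrt t * (1 - r ^ n) + ε :=
        add_le_add (key n) hnear.le
    _ ≤ (1 + Real.sqrt 2) * C * Real.sqrt t * 1 + ε := by
        have : (1:ℝ) - r ^ n ≤ 1 := by nlinarith [pow_pos hr0 n]
        have := mul_le_mul_of_nonneg_left this hnn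
        linarith
    _ = (1 + Real.sqrt 2) * C * Real.sqrt t + ε := by ring
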